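/- arXiv:2208.11623 — 3 statements merged into one kernel-verified Lean document; each statement's English description precedes it below -/
import Mathlib

section
/- Let n be even, d ≥ 1, and for each parameter vector γ ∈ ℝ^p let S(γ) be a two-qubit unitary on ℂ^4. Let U(θ) = ∏_{j=1}^{d} ∏_{i=1}^{n/2} S(θ_{ij})[2(i−1)⊕j, 2(i−1)⊕j⊕1] be the depth-d alternating layered ansatz on n qubits, where ⊕ denotes addition modulo n and θ ∈ ℝ^{(n/2)×d×p}. Then for every n-qubit 1-local observable O and every θ, the operator W_O(θ) = U(θ)† O U(θ) satisfies ‖W_O(θ)‖_∞ = ‖O‖_∞ and W_O(θ) is 2d-local, i.e., there exists a sub-register A of 2d qubits and a Hermitian operator W̃ on ℂ^{2^{2d}} such that W_O(θ) acts as W̃ on A and as the identity on all other qubits. -/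
open scoped BigOperators Matrix Classical ComplexOrder

noncomputable section

abbrev QOp (n : ℕ) : Type := Matrix (Fin n → Fin 2) (Fin n → Fin 2) ℂ

def IsState {n : ℕ} (ρ : QOp n) : Prop := ρ.PosSemidef ∧ ρ.trace = 1

def ActsOn {n : ℕ} (V : QOp n) (A : Finset (Fin n)) : Prop :=
  ∃ W : Matrix ({i // i ∈ A} → Fin 2) ({i // i ∈ A} → Fin 2) ℂ,
    ∀ x y : Fin n → Fin 2,
      V x y = if (∀ i ∉ A, x i = y i)
        then W (fun a => x a.1) (fun a => y a.1) else 0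

def IsKLocal {n : ℕ} (V : QOp n) (k : ℕ) : Prop :=
  ∃ A : Finset (Fin n), A.card ≤ k ∧ ActsOn V A

def specNorm {n : ℕ} (M : QOp n) : ℝ :=
  ‖Matrix.toEuclideanCLM (𝕜 := ℂ) M‖

def Hgate : Matrix (Fin 2) (Fin 2) ℂ := (Real.sqrt 2 : ℂ)⁻¹ • !![1, 1; 1, -1]

def Sgate : Matrix (Fin 2) (Fin 2) ℂ := !![1, 0; 0, Complex.I]

def shadowGate (g : Fin 3) : Matrix (Fin 2) (Fin 2) ℂ :=
  if g = 0 then 1 else if g = 1 then Hgate else Hgate * Sgateᴴ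

def ketbra (u : Fin 2) : Matrix (Fin 2) (Fin 2) ℂ := Matrix.single u u 1

def shadowFactor (U : Matrix (Fin 2) (Fin 2) ℂ) (u : Fin 2) : Matrix (Fin 2) (Fin 2) ℂ :=
  (3 : ℂ) • (Uᴴ * ketbra u * U) - 1

def tens {n : ℕ} (m : Fin n → Matrix (Fin 2) (Fin 2) ℂ) : QOp n :=
  fun x y => ∏ i, m i (x i) (y i)

abbrev Sample (n : ℕ) := (Fin n → Fin 3) × (Fin n → Fin 2)

def rotGate {n : ℕ} (g : Fin n → Fin 3) : QOp n := tens (fun i => shadowGate (g i))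

def bornProb {n : ℕ} (ρ : QOp n) (g : Fin n → Fin 3) (u : Fin n → Fin 2) : ℝ :=
  ((rotGate g * ρ * (rotGate g)ᴴ) u u).re

def shadowOf {n : ℕ} (g : Fin n → Fin 3) (u : Fin n → Fin 2) : QOp n :=
  tens (fun i => shadowFactor (shadowGate (g i)) (u i))

def sampleWeight {n : ℕ} (ρ : QOp n) (s : Sample n) : ℝ :=
  (1/3 : ℝ) ^ n * bornProb ρ s.1 s.2

def shadowProb {n T : ℕ} (ρ : QOp n) (E : (Fin T → Sample n) → Prop) : ℝ :=
  ∑ ω : Fin T → Sample n, (if E ω then ∏ t, sampleWeight ρ (ω t) else 0)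

def shadowAvg {n T : ℕ} (ω : Fin T → Sample n) : QOp n :=
  (T : ℂ)⁻¹ • ∑ t, shadowOf (ω t).1 (ω t).2

def idx (n : ℕ) (hn : 0 < n) (m : ℕ) : Fin n := ⟨m % n, Nat.mod_lt m hn⟩

def applyOn {n k : ℕ} (V : Matrix (Fin k → Fin 2) (Fin k → Fin 2) ℂ)
    (q : Fin k → Fin n) : QOp n :=
  fun x y => if (∀ i : Fin n, (∀ a, i ≠ q a) → x i = y i)
    then V (fun a => x (q a)) (fun a => y (q a)) else 0

def apply2 {n : ℕ} (V : Matrix (Fin 2 → Fin 2) (Fin 2 → Fin 2) ℂ) (q1 q2 : Fin n) : QOp n :=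
  applyOn V ![q1, q2]

def ansatz (n : ℕ) (hn : 0 < n) (d p : ℕ)
    (S : (Fin p → ℝ) → Matrix (Fin 2 → Fin 2) (Fin 2 → Fin 2) ℂ)
    (θ : Fin (n / 2) → Fin d → Fin p → ℝ) : QOp n :=
  ((List.finRange d).map (fun j =>
    ((List.finRange (n / 2)).map (fun i =>
      apply2 (S (θ i j)) (idx n hn (2 * (i : ℕ) + (j : ℕ) + 1))
        (idx n hn (2 * (i : ℕ) + (j : ℕ) + 2)))).prod)).prod

open Fin.NatCast Fin.CommRing

namespace LCAux

variable {n : ℕ}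

def emb (A : Finset (Fin n)) (W : Matrix ({i // i ∈ A} → Fin 2) ({i // i ∈ A} → Fin 2) ℂ) :
    QOp n :=
  fun x y => if (∀ i ∉ A, x i = y i) then W (fun a => x a.1) (fun a => y a.1) else 0

lemma actsOn_iff_emb {V : QOp n} {A : Finset (Fin n)} : ActsOn V A ↔ ∃ W, V = emb A W := by
  constructor
  · rintro ⟨W, h⟩; exact ⟨W, by funext x y; exact h x y⟩
  · rintro ⟨W, rfl⟩; exact ⟨W, fun x y => rfl⟩

lemma emb_pos {A : Finset (Fin n)} {W} {x y : Fin n → Fin 2} (h : ∀ i ∉ A, x i = y i) :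
    emb A W x y = W (fun a => x a.1) (fun a => y a.1) := if_pos h

lemma emb_neg {A : Finset (Fin n)} {W} {x y : Fin n → Fin 2} (i : Fin n) (hi : i ∉ A)
    (hne : x i ≠ y i) : emb A W x y = 0 :=
  if_neg (by push_neg; exact ⟨i, hi, hne⟩)

lemma emb_mul (A : Finset (Fin n)) (W₁ W₂) :
    emb A W₁ * emb A W₂ = emb A (W₁ * W₂) := by
  funext x y
  show ∑ z, emb A W₁ x z * emb A W₂ z y = emb A (W₁ * W₂) x y
  by_cases h : ∀ i ∉ A, x i = y i
  · rw [emb_pos h, Matrix.mul_apply]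
    set e := (Equiv.piEquivPiSubtypeProd (fun i : Fin n => i ∈ A) (fun _ => Fin 2)).symm with he
    rw [← Equiv.sum_comp e (fun z => emb A W₁ x z * emb A W₂ z y), Fintype.sum_prod_type]
    refine Finset.sum_congr rfl fun u _ => ?_
    rw [Finset.sum_eq_single (fun i : {i : Fin n // ¬ i ∈ A} => x i.1)]
    · set z := e (u, fun i : {i : Fin n // ¬ i ∈ A} => x i.1) with hz
      have hz1 : ∀ i, i ∉ A → z i = x i := by
        intro i hi
        simp [hz, he, Equiv.piEquivPiSubtypeProd_symm_apply, dif_neg hi]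
      have hz2 : (fun a : {i // i ∈ A} => z a.1) = u := by
        funext a
        simp [hz, he, Equiv.piEquivPiSubtypeProd_symm_apply, dif_pos a.2]
      rw [emb_pos (fun i hi => (hz1 i hi).symm), emb_pos (fun i hi => (hz1 i hi).trans (h i hi)),
        hz2]
    · intro v _ hv
      obtain ⟨i, hi⟩ := Function.ne_iff.mp hv
      have : x i.1 ≠ e (u, v) i.1 := by
        simpa [he, Equiv.piEquivPiSubtypeProd_symm_apply, dif_neg i.2] using Ne.symm hi
      rw [emb_neg i.1 i.2 this, zero_mul]
    · intro hmem; exact absurd (Finset.mem_univ _) hmem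
  · push_neg at h
    obtain ⟨i, hi, hne⟩ := h
    rw [emb_neg i hi hne]
    refine Finset.sum_eq_zero fun z _ => ?_
    by_cases hxz : x i = z i
    · rw [show emb A W₂ z y = 0 from emb_neg i hi (fun hzy => hne (hxz.trans hzy)), mul_zero]
    · rw [show emb A W₁ x z = 0 from emb_neg i hi hxz, zero_mul]

lemma emb_conjT (A : Finset (Fin n)) (W) : (emb A W)ᴴ = emb A Wᴴ := by
  funext x y
  by_cases h : ∀ i ∉ A, x i = y i
  · have h' : ∀ i ∉ A, y i = x i := fun i hi => (h i hi).symm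
    rw [Matrix.conjTranspose_apply, emb_pos h, emb_pos h']
    rfl
  · have h' : ¬ ∀ i ∉ A, y i = x i := fun hc => h fun i hi => (hc i hi).symm
    push_neg at h h'
    obtain ⟨i, hi, hne⟩ := h'
    rw [Matrix.conjTranspose_apply, emb_neg i hi hne, star_zero]
    obtain ⟨j, hj, hne'⟩ := h
    rw [emb_neg j hj hne']

lemma emb_one (A : Finset (Fin n)) : emb A (1 : Matrix _ _ ℂ) = 1 := by
  funext x y
  by_cases hxy : x = y
  · subst hxy
    rw [emb_pos (fun _ _ => rfl), Matrix.one_apply_eq, Matrix.one_apply_eq]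
  · rw [Matrix.one_apply_ne hxy]
    by_cases h : ∀ i ∉ A, x i = y i
    · rw [emb_pos h, Matrix.one_apply_ne]
      intro hc
      apply hxy
      funext i
      by_cases hi : i ∈ A
      · exact congrFun hc ⟨i, hi⟩
      · exact h i hi
    · push_neg at h
      obtain ⟨i, hi, hne⟩ := h
      rw [emb_neg i hi hne]

lemma actsOn_mono {V : QOp n} {A B : Finset (Fin n)} (hAB : A ⊆ B) (h : ActsOn V A) :
    ActsOn V B := by
  obtain ⟨W, rfl⟩ := actsOn_iff_emb.mp h
  rw [actsOn_iff_emb]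
  refine ⟨fun u v => emb A W (fun i => if h : i ∈ B then u ⟨i, h⟩ else 0)
    (fun i => if h : i ∈ B then v ⟨i, h⟩ else 0), ?_⟩
  funext x y
  show emb A W x y = emb B _ x y
  by_cases hB : ∀ i ∉ B, x i = y i
  · refine Eq.trans ?_ (emb_pos hB).symm
    set mx : Fin n → Fin 2 := fun i => if h : i ∈ B then x i else 0 with hmx
    set my : Fin n → Fin 2 := fun i => if h : i ∈ B then y i else 0 with hmy
    show emb A W x y = emb A W mx my
    by_cases hA : ∀ i ∉ A, x i = y i
    · have hA' : ∀ i ∉ A, mx i = my i := by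
        intro i hi
        by_cases hiB : i ∈ B
        · simp [hmx, hmy, hiB, hA i hi]
        · simp [hmx, hmy, hiB]
      rw [emb_pos hA, emb_pos hA']
      have e1 : (fun a : {i // i ∈ A} => mx a.1) = fun a : {i // i ∈ A} => x a.1 := by
        funext a; simp [hmx, hAB a.2]
      have e2 : (fun a : {i // i ∈ A} => my a.1) = fun a : {i // i ∈ A} => y a.1 := by
        funext a; simp [hmy, hAB a.2]
      rw [e1, e2]
    · push_neg at hA
      obtain ⟨i, hi, hne⟩ := hA
      have hiB : i ∈ B := by
        by_contra hc; exact hne (hB i hc)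
      have hne' : mx i ≠ my i := by simpa [hmx, hmy, hiB] using hne
      rw [emb_neg i hi hne]
      exact (emb_neg i hi hne').symm
  · push_neg at hB
    obtain ⟨i, hi, hne⟩ := hB
    rw [emb_neg (W := W) i (fun hc => hi (hAB hc)) hne]
    exact (emb_neg i hi hne).symm

lemma actsOn_univ (V : QOp n) : ActsOn V (Finset.univ : Finset (Fin n)) := by
  refine ⟨fun u v => V (fun i => u ⟨i, Finset.mem_univ i⟩) (fun i => v ⟨i, Finset.mem_univ i⟩),
    fun x y => ?_⟩
  rw [if_pos (by intro i hi; exact absurd (Finset.mem_univ i) hi)]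

lemma actsOn_mul {V G : QOp n} {A B : Finset (Fin n)} (hV : ActsOn V A) (hG : ActsOn G B) :
    ActsOn (V * G) (A ∪ B) := by
  have h1 : ActsOn V (A ∪ B) := actsOn_mono Finset.subset_union_left hV
  have h2 : ActsOn G (A ∪ B) := actsOn_mono Finset.subset_union_right hG
  obtain ⟨W1, e1⟩ := actsOn_iff_emb.mp h1
  obtain ⟨W2, e2⟩ := actsOn_iff_emb.mp h2
  rw [actsOn_iff_emb]
  exact ⟨W1 * W2, by rw [e1, e2, emb_mul]⟩

lemma actsOn_conjT {V : QOp n} {A : Finset (Fin n)} (hV : ActsOn V A) : ActsOn Vᴴ A := by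
  obtain ⟨W, rfl⟩ := actsOn_iff_emb.mp hV
  rw [actsOn_iff_emb]
  exact ⟨Wᴴ, emb_conjT A W⟩


lemma actsOn_comm {V G : QOp n} {A B : Finset (Fin n)}
    (hV : ActsOn V A) (hG : ActsOn G B) (hAB : Disjoint A B) : V * G = G * V := by
  obtain ⟨W, rfl⟩ := actsOn_iff_emb.mp hV
  obtain ⟨W', rfl⟩ := actsOn_iff_emb.mp hG
  funext x y
  have hAnB : ∀ i ∈ A, i ∉ B := fun i hi => Finset.disjoint_left.mp hAB hi
  show ∑ z, emb A W x z * emb B W' z y = ∑ z, emb B W' x z * emb A W z y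
  set z₀ : Fin n → Fin 2 := fun i => if i ∈ A then y i else x i with hz₀
  set z₁ : Fin n → Fin 2 := fun i => if i ∈ B then y i else x i with hz₁
  rw [Finset.sum_eq_single z₀ ?side0 (fun hm => absurd (Finset.mem_univ _) hm),
      Finset.sum_eq_single z₁ ?side1 (fun hm => absurd (Finset.mem_univ _) hm)]
  case side0 =>
    intro z _ hz
    obtain ⟨i, hi⟩ := Function.ne_iff.mp hz
    by_cases hiA : i ∈ A
    · have : z i ≠ y i := by simpa [hz₀, hiA] using hi
      rw [show emb B W' z y = 0 from emb_neg i (hAnB i hiA) this, mul_zero]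
    · have : x i ≠ z i := by
        simp only [hz₀, if_neg hiA] at hi
        exact Ne.symm hi
      rw [show emb A W x z = 0 from emb_neg i hiA this, zero_mul]
  case side1 =>
    intro z _ hz
    obtain ⟨i, hi⟩ := Function.ne_iff.mp hz
    by_cases hiB : i ∈ B
    · have hiA : i ∉ A := fun hc => hAnB i hc hiB
      have : z i ≠ y i := by simpa [hz₁, hiB] using hi
      rw [show emb A W z y = 0 from emb_neg i hiA this, mul_zero]
    · have : x i ≠ z i := by
        simp only [hz₁, if_neg hiB] at hi
        exact Ne.symm hi
      rw [show emb B W' x z = 0 from emb_neg i hiB this, zero_mul]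
  have c0 : ∀ i ∉ A, x i = z₀ i := by intro i hi; simp [hz₀, hi]
  have c1 : ∀ i ∉ B, x i = z₁ i := by intro i hi; simp [hz₁, hi]
  rw [show emb A W x z₀ = W (fun a => x a.1) (fun a => y a.1) by
      rw [emb_pos c0]; congr 1; funext a; simp [hz₀, a.2],
    show emb B W' x z₁ = W' (fun a => x a.1) (fun a => y a.1) by
      rw [emb_pos c1]; congr 1; funext a; simp [hz₁, a.2]]
  by_cases hc : ∀ i, i ∉ A → i ∉ B → x i = y i
  · have d0 : ∀ i ∉ B, z₀ i = y i := by
      intro i hi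
      by_cases hiA : i ∈ A
      · simp [hz₀, hiA]
      · simp [hz₀, hiA, hc i hiA hi]
    have d1 : ∀ i ∉ A, z₁ i = y i := by
      intro i hi
      by_cases hiB : i ∈ B
      · simp [hz₁, hiB]
      · simp [hz₁, hiB, hc i hi hiB]
    rw [show emb B W' z₀ y = W' (fun a => x a.1) (fun a => y a.1) by
        rw [emb_pos d0]; congr 1; funext a; simp [hz₀, show (a.1 : Fin n) ∉ A from fun h => hAnB a.1 h a.2],
      show emb A W z₁ y = W (fun a => x a.1) (fun a => y a.1) by
        rw [emb_pos d1]; congr 1; funext a; simp [hz₁, hAnB a.1 a.2]]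
    ring
  · push_neg at hc
    obtain ⟨i, hiA, hiB, hne⟩ := hc
    rw [show emb B W' z₀ y = 0 from emb_neg i hiB (by simpa [hz₀, hiA] using hne),
      show emb A W z₁ y = 0 from emb_neg i hiA (by simpa [hz₁, hiB] using hne),
      mul_zero, mul_zero]


lemma mem_pair_q (q1 q2 : Fin n) (a : Fin 2) : ![q1, q2] a ∈ ({q1, q2} : Finset (Fin n)) := by
  fin_cases a <;> simp

def jE {q1 q2 : Fin n} (h : q1 ≠ q2) : Fin 2 ≃ {i // i ∈ ({q1, q2} : Finset (Fin n))} where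
  toFun a := ⟨![q1, q2] a, mem_pair_q q1 q2 a⟩
  invFun s := if s.1 = q1 then 0 else 1
  left_inv a := by
    fin_cases a
    · simp
    · simp [(Ne.symm h)]
  right_inv s := by
    rcases Finset.mem_insert.mp s.2 with h1 | h1
    · simp only [h1, if_pos rfl]
      exact Subtype.ext (by simp [h1])
    · rw [Finset.mem_singleton] at h1
      simp only [h1, if_neg (Ne.symm h)]
      exact Subtype.ext (by simp [h1])

def σe {q1 q2 : Fin n} (h : q1 ≠ q2) :
    ({i // i ∈ ({q1, q2} : Finset (Fin n))} → Fin 2) ≃ (Fin 2 → Fin 2) :=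
  Equiv.arrowCongr (jE h).symm (Equiv.refl _)

lemma apply2_eq_emb {q1 q2 : Fin n} (h : q1 ≠ q2) (V) :
    apply2 V q1 q2 = emb {q1, q2} (V.submatrix (σe h) (σe h)) := by
  funext x y
  show (if (∀ i : Fin n, (∀ a, i ≠ ![q1, q2] a) → x i = y i)
      then V (fun a => x (![q1, q2] a)) (fun a => y (![q1, q2] a)) else 0) = _
  have hcond : (∀ i : Fin n, (∀ a, i ≠ ![q1, q2] a) → x i = y i)
      ↔ (∀ i ∉ ({q1, q2} : Finset (Fin n)), x i = y i) := by
    apply forall_congr'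
    intro i
    simp [Fin.forall_fin_two, and_imp]
  show _ = (if (∀ i ∉ ({q1, q2} : Finset (Fin n)), x i = y i) then _ else 0)
  refine if_congr hcond rfl rfl

lemma actsOn_apply2 {q1 q2 : Fin n} (h : q1 ≠ q2) (V) :
    ActsOn (apply2 V q1 q2) {q1, q2} :=
  actsOn_iff_emb.mpr ⟨_, apply2_eq_emb h V⟩

lemma apply2_mul {q1 q2 : Fin n} (h : q1 ≠ q2) (V₁ V₂) :
    apply2 V₁ q1 q2 * apply2 V₂ q1 q2 = apply2 (V₁ * V₂) q1 q2 := by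
  rw [apply2_eq_emb h, apply2_eq_emb h, apply2_eq_emb h, emb_mul,
    Matrix.submatrix_mul_equiv]

lemma apply2_conjT {q1 q2 : Fin n} (h : q1 ≠ q2) (V) :
    (apply2 V q1 q2)ᴴ = apply2 Vᴴ q1 q2 := by
  rw [apply2_eq_emb h, apply2_eq_emb h, emb_conjT, Matrix.conjTranspose_submatrix]

lemma apply2_one {q1 q2 : Fin n} (h : q1 ≠ q2) :
    apply2 (1 : Matrix (Fin 2 → Fin 2) (Fin 2 → Fin 2) ℂ) q1 q2 = 1 := by
  rw [apply2_eq_emb h, Matrix.submatrix_one_equiv, emb_one]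

section IVal
variable [NeZero n]

def ival (s : Fin n) (len : ℕ) : Finset (Fin n) :=
  (Finset.range len).image (fun t : ℕ => s + (t : Fin n))

lemma mem_ival {s : Fin n} {len : ℕ} {x : Fin n} :
    x ∈ ival s len ↔ ∃ t, t < len ∧ x = s + (t : Fin n) := by
  unfold ival
  rw [Finset.mem_image]
  constructor
  · rintro ⟨t, ht, rfl⟩
    exact ⟨t, Finset.mem_range.mp ht, rfl⟩
  · rintro ⟨t, ht, rfl⟩
    exact ⟨t, Finset.mem_range.mpr ht, rfl⟩

lemma ival_card (s : Fin n) (len : ℕ) : (ival s len).card ≤ len :=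
  le_trans Finset.card_image_le (le_of_eq (Finset.card_range len))

lemma natCast_inj_of_lt {a b : ℕ} (ha : a < n) (hb : b < n) (h : (a : Fin n) = b) : a = b := by
  have h2 := congrArg Fin.val h
  rwa [Fin.val_natCast, Fin.val_natCast, Nat.mod_eq_of_lt ha, Nat.mod_eq_of_lt hb] at h2

lemma pair_dich {s : Fin n} {len : ℕ} {p : ℕ}
    (hnd : ¬ Disjoint (ival ((p : ℕ) : Fin n) 2) (ival s len)) :
    ival ((p : ℕ) : Fin n) 2 ⊆ ival (s - 1) (len + 2) := by
  rw [Finset.not_disjoint_iff] at hnd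
  obtain ⟨x, hx1, hx2⟩ := hnd
  rw [mem_ival] at hx1 hx2
  obtain ⟨e, he, hxe⟩ := hx1
  obtain ⟨t, ht, hxt⟩ := hx2
  intro w hw
  rw [mem_ival] at hw ⊢
  obtain ⟨e', he', hwe⟩ := hw
  refine ⟨t + 1 + e' - e, by omega, ?_⟩
  have hcast : ((t + 1 + e' - e : ℕ) : Fin n)
      = (t : Fin n) + 1 + (e' : Fin n) - (e : Fin n) := by
    rw [Nat.cast_sub (by omega : e ≤ t + 1 + e')]
    push_cast
    ring
  rw [hwe, hcast]
  linear_combination hxe.symm.trans hxt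

lemma pair_disj (hev : 2 * (n / 2) = n) {j : ℕ} {i i' : ℕ}
    (hi : i < n / 2) (hi' : i' < n / 2) (hne : i ≠ i') :
    Disjoint (ival ((2 * i + j + 1 : ℕ) : Fin n) 2) (ival ((2 * i' + j + 1 : ℕ) : Fin n) 2) := by
  rw [Finset.disjoint_left]
  intro x hx hx'
  rw [mem_ival] at hx hx'
  obtain ⟨t, ht, rfl⟩ := hx
  obtain ⟨t', ht', he⟩ := hx'
  have h2 : ((2 * i + t : ℕ) : Fin n) = ((2 * i' + t' : ℕ) : Fin n) := by
    have h3 : ((2 * i + t : ℕ) : Fin n) + ((j + 1 : ℕ) : Fin n)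
        = ((2 * i' + t' : ℕ) : Fin n) + ((j + 1 : ℕ) : Fin n) := by
      push_cast at he ⊢
      linear_combination he
    exact add_right_cancel h3
  have := natCast_inj_of_lt (by omega) (by omega) h2
  omega

lemma cover0 (hev : 2 * (n / 2) = n) (hn : 0 < n) (a : Fin n) :
    ∃ i : ℕ, i < n / 2 ∧ a ∈ ival ((2 * i + 1 : ℕ) : Fin n) 2 := by
  by_cases ha : a.val = 0
  · refine ⟨n / 2 - 1, by omega, ?_⟩
    rw [mem_ival]
    refine ⟨1, one_lt_two, ?_⟩
    have h1 : ((2 * (n / 2 - 1) + 1 : ℕ) : Fin n) + ((1 : ℕ) : Fin n)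
        = ((2 * (n / 2 - 1) + 1 + 1 : ℕ) : Fin n) := by push_cast; ring
    rw [h1, show 2 * (n / 2 - 1) + 1 + 1 = n by omega, Fin.natCast_self]
    exact Fin.ext ha
  · refine ⟨(a.val - 1) / 2, by omega, ?_⟩
    rw [mem_ival]
    refine ⟨(a.val - 1) % 2, Nat.mod_lt _ two_pos, ?_⟩
    have h1 : ((2 * ((a.val - 1) / 2) + 1 : ℕ) : Fin n) + (((a.val - 1) % 2 : ℕ) : Fin n)
        = ((2 * ((a.val - 1) / 2) + 1 + (a.val - 1) % 2 : ℕ) : Fin n) := by push_cast; ring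
    rw [h1, show 2 * ((a.val - 1) / 2) + 1 + (a.val - 1) % 2 = a.val by omega,
      Fin.cast_val_eq_self]

lemma consecutive_ne (h2 : 2 ≤ n) (m : ℕ) : ((m : ℕ) : Fin n) ≠ ((m + 1 : ℕ) : Fin n) := by
  intro h
  have h0 : ((1 : ℕ) : Fin n) = ((0 : ℕ) : Fin n) := by
    push_cast at h ⊢
    linear_combination -h
  have := natCast_inj_of_lt (by omega) (by omega) h0
  omega

end IVal

lemma conj_gates {ι : Type*} (g : ι → QOp n) (B : ι → Finset (Fin n)) :
    ∀ (l : List ι), (∀ i ∈ l, ActsOn (g i) (B i)) → (∀ i ∈ l, (g i)ᴴ * g i = 1) →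
      l.Pairwise (fun i i' => Disjoint (B i) (B i')) →
      ∀ (V : QOp n) (A C : Finset (Fin n)), ActsOn V A → A ⊆ C →
      (∀ i ∈ l, Disjoint (B i) A ∨ B i ⊆ C) →
      ActsOn (((l.map g).prod)ᴴ * V * (l.map g).prod) C := by
  intro l
  induction l with
  | nil =>
    intro _ _ _ V A C hV hAC _
    simpa using actsOn_mono hAC hV
  | cons i l ih =>
    intro hg hu hpw V A C hV hAC hdich
    have hgi : ActsOn (g i) (B i) := hg i (List.mem_cons_self)
    rw [List.map_cons, List.prod_cons, Matrix.conjTranspose_mul]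
    have hrw : (((l.map g).prod)ᴴ * (g i)ᴴ) * V * (g i * (l.map g).prod)
        = ((l.map g).prod)ᴴ * ((g i)ᴴ * V * g i) * (l.map g).prod := by
      noncomm_ring
    rw [hrw]
    have hg' : ∀ i' ∈ l, ActsOn (g i') (B i') := fun i' h => hg i' (List.mem_cons_of_mem _ h)
    have hu' : ∀ i' ∈ l, (g i')ᴴ * g i' = 1 := fun i' h => hu i' (List.mem_cons_of_mem _ h)
    have hpw' := (List.pairwise_cons.mp hpw).2
    have hpwh := (List.pairwise_cons.mp hpw).1
    rcases hdich i (List.mem_cons_self) with hdisj | hsub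
    · have hcomm : V * g i = g i * V := actsOn_comm hV hgi hdisj.symm
      have heq : (g i)ᴴ * V * g i = V := by
        rw [Matrix.mul_assoc, hcomm, ← Matrix.mul_assoc, hu i (List.mem_cons_self),
          Matrix.one_mul]
      rw [heq]
      exact ih hg' hu' hpw' V A C hV hAC
        (fun i' h => hdich i' (List.mem_cons_of_mem _ h))
    · have h1 : ActsOn ((g i)ᴴ * V * g i) ((B i ∪ A) ∪ B i) :=
        actsOn_mul (actsOn_mul (actsOn_conjT hgi) hV) hgi
      refine ih hg' hu' hpw' _ ((B i ∪ A) ∪ B i) C h1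
        (by
          intro x hx
          simp only [Finset.mem_union] at hx
          rcases hx with (hx | hx) | hx
          · exact hsub hx
          · exact hAC hx
          · exact hsub hx) ?_
      intro i' h
      rcases hdich i' (List.mem_cons_of_mem _ h) with hdisj' | hsub'
      · left
        have hd2 : Disjoint (B i') (B i) := (hpwh i' h).symm
        rw [Finset.disjoint_union_right, Finset.disjoint_union_right]
        exact ⟨⟨hd2, hdisj'⟩, hd2⟩
      · right; exact hsub'

end LCAux

namespace LCAux

def gateOp {n : ℕ} (hn : 0 < n) {d p : ℕ}
    (S : (Fin p → ℝ) → Matrix (Fin 2 → Fin 2) (Fin 2 → Fin 2) ℂ)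
    (θ : Fin (n / 2) → Fin d → Fin p → ℝ) (j : Fin d) (i : Fin (n / 2)) : QOp n :=
  apply2 (S (θ i j)) (idx n hn (2 * (i : ℕ) + (j : ℕ) + 1))
    (idx n hn (2 * (i : ℕ) + (j : ℕ) + 2))

def layerOp {n : ℕ} (hn : 0 < n) {d p : ℕ}
    (S : (Fin p → ℝ) → Matrix (Fin 2 → Fin 2) (Fin 2 → Fin 2) ℂ)
    (θ : Fin (n / 2) → Fin d → Fin p → ℝ) (j : Fin d) : QOp n :=
  ((List.finRange (n / 2)).map (gateOp hn S θ j)).prod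

lemma ansatz_eq {n : ℕ} (hn : 0 < n) {d p : ℕ}
    (S : (Fin p → ℝ) → Matrix (Fin 2 → Fin 2) (Fin 2 → Fin 2) ℂ)
    (θ : Fin (n / 2) → Fin d → Fin p → ℝ) :
    ansatz n hn d p S θ = ((List.finRange d).map (layerOp hn S θ)).prod := rfl

lemma cstar_conj_norm {E : Type*} [NormedRing E] [StarRing E] [CStarRing E] [NormOneClass E]
    (u a : E) (h1 : star u * u = 1) (h2 : u * star u = 1) : ‖star u * a * u‖ = ‖a‖ := by
  have hle : ∀ v b : E, star v * v = 1 → ‖star v * b * v‖ ≤ ‖b‖ := by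
    intro v b hv
    have hu1 : ‖v‖ = 1 := by
      have h3 : ‖star v * v‖ = ‖v‖ * ‖v‖ := CStarRing.norm_star_mul_self
      rw [hv, norm_one] at h3
      nlinarith [norm_nonneg v]
    have hsu : ‖star v‖ = 1 := by rw [norm_star, hu1]
    calc ‖star v * b * v‖ ≤ ‖star v * b‖ * ‖v‖ := norm_mul_le _ _
      _ ≤ ‖star v‖ * ‖b‖ * ‖v‖ :=
        mul_le_mul_of_nonneg_right (norm_mul_le _ _) (norm_nonneg _)
      _ = ‖b‖ := by rw [hsu, hu1, one_mul, mul_one]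
  refine le_antisymm (hle u a h1) ?_
  have h3 := hle (star u) (star u * a * u) (by rwa [star_star])
  have h4 : star (star u) * (star u * a * u) * star u = a := by
    rw [star_star]
    calc u * (star u * a * u) * star u = (u * star u) * a * (u * star u) := by noncomm_ring
      _ = a := by rw [h2, one_mul, mul_one]
  rwa [h4] at h3

lemma specNorm_conj {n : ℕ} (U M : QOp n)
    (hU : U ∈ Matrix.unitaryGroup (Fin n → Fin 2) ℂ) :
    specNorm (Uᴴ * M * U) = specNorm M := by
  have h1 : star U * U = 1 := Matrix.mem_unitaryGroup_iff'.mp hU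
  have h2 : U * star U = 1 := Matrix.mem_unitaryGroup_iff.mp hU
  unfold specNorm
  have h5 : Matrix.toEuclideanCLM (𝕜 := ℂ) (Uᴴ * M * U)
      = star (Matrix.toEuclideanCLM (𝕜 := ℂ) U) * Matrix.toEuclideanCLM (𝕜 := ℂ) M
        * Matrix.toEuclideanCLM (𝕜 := ℂ) U := by
    rw [← Matrix.star_eq_conjTranspose, map_mul, map_mul, map_star]
  rw [h5]
  have key : ∀ (u a : EuclideanSpace ℂ (Fin n → Fin 2) →L[ℂ] EuclideanSpace ℂ (Fin n → Fin 2)),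
      star u * u = 1 → u * star u = 1 → ‖star u * a * u‖ = ‖a‖ :=
    fun u a h1 h2 => cstar_conj_norm u a h1 h2
  refine key _ _ ?_ ?_
  · rw [← map_star, ← map_mul, h1, map_one]
  · rw [← map_star, ← map_mul, h2, map_one]

end LCAux

/-- For the depth-`d` alternating layered ansatz `U(θ)` on `n` qubits
(`n` even, `d ≥ 1`) built from two-qubit unitaries `S(γ)`, and any 1-local Hermitian
observable `O`, the operator `W_O(θ) = U(θ)† O U(θ)` has the same spectral norm as `O`,
is `2d`-local (acts non-trivially on a sub-register of at most `2d` qubits), and is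
Hermitian. -/
theorem alternating_layered_conjugation_local
    (n d p : ℕ) (hn : 0 < n) (hEven : Even n) (hd : 1 ≤ d)
    (S : (Fin p → ℝ) → Matrix (Fin 2 → Fin 2) (Fin 2 → Fin 2) ℂ)
    (hS : ∀ γ, S γ ∈ Matrix.unitaryGroup (Fin 2 → Fin 2) ℂ)
    (O : QOp n) (hOH : O.IsHermitian) (hOloc : IsKLocal O 1)
    (θ : Fin (n / 2) → Fin d → Fin p → ℝ) :
    specNorm ((ansatz n hn d p S θ)ᴴ * O * ansatz n hn d p S θ) = specNorm O ∧
    IsKLocal ((ansatz n hn d p S θ)ᴴ * O * ansatz n hn d p S θ) (2 * d) ∧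
    ((ansatz n hn d p S θ)ᴴ * O * ansatz n hn d p S θ).IsHermitian := by
  classical
  haveI : NeZero n := ⟨hn.ne'⟩
  obtain ⟨k, hk⟩ := hEven
  have h2 : 2 ≤ n := by omega
  have hev : 2 * (n / 2) = n := by omega
  set U := ansatz n hn d p S θ with hUdef
  have hidx : ∀ m : ℕ, idx n hn m = ((m : ℕ) : Fin n) := by
    intro m
    apply Fin.ext
    rw [Fin.val_natCast]
    rfl
  have hqne : ∀ m : ℕ, idx n hn m ≠ idx n hn (m + 1) := by
    intro m
    rw [hidx, hidx]
    exact LCAux.consecutive_ne h2 m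
  have hne12 : ∀ (j : Fin d) (i : Fin (n / 2)),
      idx n hn (2 * (i : ℕ) + (j : ℕ) + 1) ≠ idx n hn (2 * (i : ℕ) + (j : ℕ) + 2) := by
    intro j i
    have h := hqne (2 * (i : ℕ) + (j : ℕ) + 1)
    rwa [show 2 * (i : ℕ) + (j : ℕ) + 1 + 1 = 2 * (i : ℕ) + (j : ℕ) + 2 by omega] at h
  have hSs : ∀ γ, (S γ)ᴴ * S γ = 1 := by
    intro γ
    have h := Matrix.mem_unitaryGroup_iff'.mp (hS γ)
    rwa [Matrix.star_eq_conjTranspose] at h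
  have hgate_star : ∀ (j : Fin d) (i : Fin (n / 2)),
      (LCAux.gateOp hn S θ j i)ᴴ * LCAux.gateOp hn S θ j i = 1 := by
    intro j i
    unfold LCAux.gateOp
    rw [LCAux.apply2_conjT (hne12 j i), LCAux.apply2_mul (hne12 j i), hSs,
      LCAux.apply2_one (hne12 j i)]
  have hgate_mem : ∀ (j : Fin d) (i : Fin (n / 2)),
      LCAux.gateOp hn S θ j i ∈ Matrix.unitaryGroup (Fin n → Fin 2) ℂ := by
    intro j i
    rw [Matrix.mem_unitaryGroup_iff', Matrix.star_eq_conjTranspose]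
    exact hgate_star j i
  have hU_mem : U ∈ Matrix.unitaryGroup (Fin n → Fin 2) ℂ := by
    rw [hUdef, LCAux.ansatz_eq]
    refine Submonoid.list_prod_mem _ ?_
    intro x hx
    simp only [List.mem_map] at hx
    obtain ⟨j, _, rfl⟩ := hx
    refine Submonoid.list_prod_mem _ ?_
    intro y hy
    simp only [List.mem_map] at hy
    obtain ⟨i, _, rfl⟩ := hy
    exact hgate_mem j i
  have hUU : Uᴴ * U = 1 := by
    have h := Matrix.mem_unitaryGroup_iff'.mp hU_mem
    rwa [Matrix.star_eq_conjTranspose] at h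
  have hherm : (Uᴴ * O * U).IsHermitian := by
    show (Uᴴ * O * U)ᴴ = Uᴴ * O * U
    rw [Matrix.conjTranspose_mul, Matrix.conjTranspose_mul,
      Matrix.conjTranspose_conjTranspose, hOH.eq, ← Matrix.mul_assoc]
  have hnorm := LCAux.specNorm_conj U O hU_mem
  -- gate ActsOn
  have hgact : ∀ (j : Fin d) (i : Fin (n / 2)),
      ActsOn (LCAux.gateOp hn S θ j i)
        (LCAux.ival ((2 * (i : ℕ) + (j : ℕ) + 1 : ℕ) : Fin n) 2) := by
    intro j i
    refine LCAux.actsOn_mono ?_ (LCAux.actsOn_apply2 (hne12 j i) (S (θ i j)))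
    intro x hx
    rcases Finset.mem_insert.mp hx with h | h
    · rw [LCAux.mem_ival]
      exact ⟨0, by omega, by rw [h, hidx]; simp⟩
    · rw [Finset.mem_singleton] at h
      rw [LCAux.mem_ival]
      refine ⟨1, by omega, ?_⟩
      rw [h, hidx]
      push_cast
      ring
  have hpwB : ∀ (j : Fin d), (List.finRange (n / 2)).Pairwise
      (fun (i i' : Fin (n / 2)) => Disjoint (LCAux.ival ((2 * (i : ℕ) + (j : ℕ) + 1 : ℕ) : Fin n) 2)
        (LCAux.ival ((2 * (i' : ℕ) + (j : ℕ) + 1 : ℕ) : Fin n) 2)) := by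
    intro j
    refine List.Pairwise.imp ?_ (List.nodup_finRange (n / 2))
    intro a b hab
    exact LCAux.pair_disj hev a.isLt b.isLt (fun h => hab (Fin.ext h))
  have layer_step : ∀ (j : Fin d) (V : QOp n) (s : Fin n) (len : ℕ),
      ActsOn V (LCAux.ival s len) →
      ActsOn ((LCAux.layerOp hn S θ j)ᴴ * V * LCAux.layerOp hn S θ j)
        (LCAux.ival (s - 1) (len + 2)) := by
    intro j V s len hV
    refine LCAux.conj_gates (LCAux.gateOp hn S θ j)
      (fun i => LCAux.ival ((2 * (i : ℕ) + (j : ℕ) + 1 : ℕ) : Fin n) 2)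
      (List.finRange (n / 2)) (fun i _ => hgact j i) (fun i _ => hgate_star j i)
      (hpwB j) V (LCAux.ival s len) _ hV ?_ ?_
    · intro x hx
      rw [LCAux.mem_ival] at hx ⊢
      obtain ⟨t, ht, rfl⟩ := hx
      refine ⟨t + 1, by omega, ?_⟩
      push_cast
      ring
    · intro i _
      by_cases hdj : Disjoint (LCAux.ival ((2 * (i : ℕ) + (j : ℕ) + 1 : ℕ) : Fin n) 2)
        (LCAux.ival s len)
      · exact Or.inl hdj
      · exact Or.inr (LCAux.pair_dich hdj)
  have layers_conj : ∀ (js : List (Fin d)) (V : QOp n) (s : Fin n) (len : ℕ),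
      ActsOn V (LCAux.ival s len) →
      ActsOn (((js.map (LCAux.layerOp hn S θ)).prod)ᴴ * V
          * (js.map (LCAux.layerOp hn S θ)).prod)
        (LCAux.ival (s - ((js.length : ℕ) : Fin n)) (len + 2 * js.length)) := by
    intro js
    induction js with
    | nil =>
      intro V s len hV
      simpa using hV
    | cons j js ih =>
      intro V s len hV
      rw [List.map_cons, List.prod_cons, Matrix.conjTranspose_mul]
      have hrw : (((js.map (LCAux.layerOp hn S θ)).prod)ᴴ * (LCAux.layerOp hn S θ j)ᴴ) * V
            * (LCAux.layerOp hn S θ j * (js.map (LCAux.layerOp hn S θ)).prod)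
          = ((js.map (LCAux.layerOp hn S θ)).prod)ᴴ
            * ((LCAux.layerOp hn S θ j)ᴴ * V * LCAux.layerOp hn S θ j)
            * (js.map (LCAux.layerOp hn S θ)).prod := by
        noncomm_ring
      rw [hrw]
      have h2' := ih _ (s - 1) (len + 2) (layer_step j V s len hV)
      have hs : (s - 1) - ((js.length : ℕ) : Fin n)
          = s - (((js.length + 1 : ℕ)) : Fin n) := by
        push_cast
        ring
      have hl : len + 2 + 2 * js.length = len + 2 * (js.length + 1) := by ring
      rw [hs, hl] at h2'
      simpa using h2'
  -- locality
  have hloc : IsKLocal (Uᴴ * O * U) (2 * d) := by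
    obtain ⟨A₀, hA₀card, hA₀⟩ := hOloc
    rcases Nat.le_one_iff_eq_zero_or_eq_one.mp hA₀card with hc0 | hc1
    · -- empty support
      rw [Finset.card_eq_zero] at hc0
      subst hc0
      have hcomm : O * U = U * O :=
        LCAux.actsOn_comm hA₀ (LCAux.actsOn_univ U) (by simp)
      have he : Uᴴ * O * U = O := by
        rw [Matrix.mul_assoc, hcomm, ← Matrix.mul_assoc, hUU, Matrix.one_mul]
      rw [he]
      exact ⟨∅, by simp, hA₀⟩
    · rw [Finset.card_eq_one] at hc1
      obtain ⟨a, rfl⟩ := hc1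
      obtain ⟨d', rfl⟩ : ∃ d', d = d' + 1 := ⟨d - 1, by omega⟩
      obtain ⟨i₀, hi₀, hai₀⟩ := LCAux.cover0 hev hn a
      set j0 : Fin (d' + 1) := 0 with hj0
      have hai₀' : a ∈ LCAux.ival ((2 * i₀ + ((j0 : ℕ)) + 1 : ℕ) : Fin n) 2 := by
        simpa [hj0] using hai₀
      have hstep0 : ActsOn ((LCAux.layerOp hn S θ j0)ᴴ * O * LCAux.layerOp hn S θ j0)
          (LCAux.ival ((2 * i₀ + ((j0 : ℕ)) + 1 : ℕ) : Fin n) 2) := by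
        refine LCAux.conj_gates (LCAux.gateOp hn S θ j0)
          (fun i => LCAux.ival ((2 * (i : ℕ) + ((j0 : ℕ)) + 1 : ℕ) : Fin n) 2)
          (List.finRange (n / 2)) (fun i _ => hgact j0 i) (fun i _ => hgate_star j0 i)
          (hpwB j0) O {a} _ hA₀ (Finset.singleton_subset_iff.mpr hai₀') ?_
        intro i _
        by_cases hdj : Disjoint (LCAux.ival ((2 * (i : ℕ) + ((j0 : ℕ)) + 1 : ℕ) : Fin n) 2) {a}
        · exact Or.inl hdj
        · right
          rw [Finset.not_disjoint_iff] at hdj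
          obtain ⟨x, hx1, hx2⟩ := hdj
          rw [Finset.mem_singleton] at hx2
          subst hx2
          have hii : (i : ℕ) = i₀ := by
            by_contra hne
            exact Finset.disjoint_left.mp (LCAux.pair_disj hev i.isLt hi₀ hne) hx1 hai₀'
          intro w hw
          rw [show 2 * (i : ℕ) + (j0 : ℕ) + 1 = 2 * i₀ + (j0 : ℕ) + 1 by omega] at hw
          exact hw
      have hUeq : U = LCAux.layerOp hn S θ j0
          * ((List.map Fin.succ (List.finRange d')).map (LCAux.layerOp hn S θ)).prod := by
        rw [hUdef, LCAux.ansatz_eq, List.finRange_succ, List.map_cons, List.prod_cons]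
      have hWeq : Uᴴ * O * U
          = (((List.map Fin.succ (List.finRange d')).map (LCAux.layerOp hn S θ)).prod)ᴴ
            * ((LCAux.layerOp hn S θ j0)ᴴ * O * LCAux.layerOp hn S θ j0)
            * ((List.map Fin.succ (List.finRange d')).map (LCAux.layerOp hn S θ)).prod := by
        rw [hUeq, Matrix.conjTranspose_mul]
        noncomm_ring
      have hres := layers_conj (List.map Fin.succ (List.finRange d')) _ _ _ hstep0
      rw [← hWeq] at hres
      refine ⟨_, ?_, hres⟩
      refine le_trans (LCAux.ival_card _ _) ?_
      simp only [List.length_map, List.length_finRange]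
      omega
  exact ⟨hnorm, hloc, hherm⟩

end
end

section
/- Let ρ be a single-qubit quantum state (a positive semidefinite 2×2 complex matrix with trace 1). Choose U uniformly at random from {𝟙, H, HS†} (H the Hadamard gate, S the phase gate), and then measure UρU† in the computational basis, obtaining outcome u ∈ {0,1} with probability ⟨u| UρU† |u⟩. Then the random matrix ρ̂ = 3 U† |u⟩⟨u| U − 𝟙 is an unbiased estimator of ρ: its expectation (over the uniform choice of U and the Born-rule outcome u) equals ρ. -/
open scoped BigOperators Matrix Classical ComplexOrder

noncomputable section

lemma h2 : ((Real.sqrt 2 : ℂ))⁻¹ * ((Real.sqrt 2 : ℂ))⁻¹ = 2⁻¹ := by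
  rw [← mul_inv, ← Complex.ofReal_mul, Real.mul_self_sqrt (by norm_num)]
  norm_num

lemma sg0 : shadowGate 0 = !![1, 0; 0, 1] := by
  show (1 : Matrix (Fin 2) (Fin 2) ℂ) = _
  ext i j; fin_cases i <;> fin_cases j <;> simp [Matrix.one_apply]
lemma sg1 : shadowGate 1 = !![(Real.sqrt 2 : ℂ)⁻¹, (Real.sqrt 2 : ℂ)⁻¹;
    (Real.sqrt 2 : ℂ)⁻¹, -(Real.sqrt 2 : ℂ)⁻¹] := by
  show Hgate = _
  ext i j; fin_cases i <;> fin_cases j <;> simp [Hgate]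
lemma sg2 : shadowGate 2 = !![(Real.sqrt 2 : ℂ)⁻¹, -Complex.I * (Real.sqrt 2 : ℂ)⁻¹;
    (Real.sqrt 2 : ℂ)⁻¹, Complex.I * (Real.sqrt 2 : ℂ)⁻¹] := by
  show Hgate * Sgateᴴ = _
  ext i j; fin_cases i <;> fin_cases j <;>
    simp [Hgate, Sgate, Matrix.mul_apply, Matrix.vecMul, dotProduct, Fin.sum_univ_two,
      Matrix.conjTranspose_apply] <;> ring

lemma kb0 : ketbra 0 = !![1, 0; 0, 0] := by
  ext i j; fin_cases i <;> fin_cases j <;> simp [ketbra, Matrix.single]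
lemma kb1 : ketbra 1 = !![0, 0; 0, 1] := by
  ext i j; fin_cases i <;> fin_cases j <;> simp [ketbra, Matrix.single]

lemma sf (U : Matrix (Fin 2) (Fin 2) ℂ) (u : Fin 2) :
    shadowFactor U u = (3 : ℂ) • (Uᴴ * ketbra u * U) - 1 := rfl

lemma sf00 : shadowFactor (shadowGate 0) 0 = !![2, 0; 0, -1] := by
  rw [sf, sg0, kb0]
  ext i j; fin_cases i <;> fin_cases j <;>
    simp [Matrix.mul_apply, Matrix.vecMul, dotProduct, Fin.sum_univ_two, Matrix.conjTranspose_apply,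
      Matrix.one_apply, Matrix.smul_apply, Matrix.sub_apply] <;> ring
lemma sf01 : shadowFactor (shadowGate 0) 1 = !![-1, 0; 0, 2] := by
  rw [sf, sg0, kb1]
  ext i j; fin_cases i <;> fin_cases j <;>
    simp [Matrix.mul_apply, Matrix.vecMul, dotProduct, Fin.sum_univ_two, Matrix.conjTranspose_apply,
      Matrix.one_apply, Matrix.smul_apply, Matrix.sub_apply] <;> ring
lemma sf10 : shadowFactor (shadowGate 1) 0 = !![1/2, 3/2; 3/2, 1/2] := by
  rw [sf, sg1, kb0]
  ext i j; fin_cases i <;> fin_cases j <;>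
    simp [Matrix.mul_apply, Matrix.vecMul, dotProduct, Fin.sum_univ_two, Matrix.conjTranspose_apply,
      Matrix.one_apply, Matrix.smul_apply, Matrix.sub_apply] <;>
    first
    | linear_combination (3 : ℂ) * h2
    | linear_combination (-3 : ℂ) * h2
    | linear_combination (3 : ℂ) * Complex.I * h2
    | linear_combination (-3 : ℂ) * Complex.I * h2
    | linear_combination (-3 * Complex.I^2 : ℂ) * h2 - 3 * (2:ℂ)⁻¹ * Complex.I_sq
    | ring
lemma sf11 : shadowFactor (shadowGate 1) 1 = !![1/2, -3/2; -3/2, 1/2] := by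
  rw [sf, sg1, kb1]
  ext i j; fin_cases i <;> fin_cases j <;>
    simp [Matrix.mul_apply, Matrix.vecMul, dotProduct, Fin.sum_univ_two, Matrix.conjTranspose_apply,
      Matrix.one_apply, Matrix.smul_apply, Matrix.sub_apply] <;>
    first
    | linear_combination (3 : ℂ) * h2
    | linear_combination (-3 : ℂ) * h2
    | linear_combination (3 : ℂ) * Complex.I * h2
    | linear_combination (-3 : ℂ) * Complex.I * h2
    | linear_combination (-3 * Complex.I^2 : ℂ) * h2 - 3 * (2:ℂ)⁻¹ * Complex.I_sq
    | ring
lemma sf20 : shadowFactor (shadowGate 2) 0 =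
    !![1/2, -3/2 * Complex.I; 3/2 * Complex.I, 1/2] := by
  rw [sf, sg2, kb0]
  ext i j; fin_cases i <;> fin_cases j <;>
    simp [Matrix.mul_apply, Matrix.vecMul, dotProduct, Fin.sum_univ_two, Matrix.conjTranspose_apply,
      Matrix.one_apply, Matrix.smul_apply, Matrix.sub_apply] <;>
    first
    | linear_combination (3 : ℂ) * h2
    | linear_combination (-3 : ℂ) * h2
    | linear_combination (3 : ℂ) * Complex.I * h2
    | linear_combination (-3 : ℂ) * Complex.I * h2
    | linear_combination (-3 * Complex.I^2 : ℂ) * h2 - 3 * (2:ℂ)⁻¹ * Complex.I_sq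
    | ring
lemma sf21 : shadowFactor (shadowGate 2) 1 =
    !![1/2, 3/2 * Complex.I; -3/2 * Complex.I, 1/2] := by
  rw [sf, sg2, kb1]
  ext i j; fin_cases i <;> fin_cases j <;>
    simp [Matrix.mul_apply, Matrix.vecMul, dotProduct, Fin.sum_univ_two, Matrix.conjTranspose_apply,
      Matrix.one_apply, Matrix.smul_apply, Matrix.sub_apply] <;>
    first
    | linear_combination (3 : ℂ) * h2
    | linear_combination (-3 : ℂ) * h2
    | linear_combination (3 : ℂ) * Complex.I * h2
    | linear_combination (-3 : ℂ) * Complex.I * h2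
    | linear_combination (-3 * Complex.I^2 : ℂ) * h2 - 3 * (2:ℂ)⁻¹ * Complex.I_sq
    | ring

section
variable (ρ : Matrix (Fin 2) (Fin 2) ℂ)

lemma c10 : (shadowGate 1 * ρ * (shadowGate 1)ᴴ) 0 0
    = (ρ 0 0 + ρ 0 1 + ρ 1 0 + ρ 1 1) / 2 := by
  simp [sg1, Matrix.mul_apply, Matrix.vecMul, dotProduct, Fin.sum_univ_two, Matrix.conjTranspose_apply,
    Complex.ofReal_inv]
  linear_combination (ρ 0 0 + ρ 0 1 + ρ 1 0 + ρ 1 1) * h2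

lemma c11 : (shadowGate 1 * ρ * (shadowGate 1)ᴴ) 1 1
    = (ρ 0 0 - ρ 0 1 - ρ 1 0 + ρ 1 1) / 2 := by
  simp [sg1, Matrix.mul_apply, Matrix.vecMul, dotProduct, Fin.sum_univ_two, Matrix.conjTranspose_apply,
    Complex.ofReal_inv]
  linear_combination (ρ 0 0 - ρ 0 1 - ρ 1 0 + ρ 1 1) * h2

lemma c20 : (shadowGate 2 * ρ * (shadowGate 2)ᴴ) 0 0
    = (ρ 0 0 + Complex.I * ρ 0 1 - Complex.I * ρ 1 0 + ρ 1 1) / 2 := by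
  simp [sg2, Matrix.mul_apply, Matrix.vecMul, dotProduct, Fin.sum_univ_two, Matrix.conjTranspose_apply,
    Complex.ofReal_inv]
  linear_combination (ρ 0 0 + Complex.I * ρ 0 1 - Complex.I * ρ 1 0
      - Complex.I ^ 2 * ρ 1 1) * h2 - (1/2 : ℂ) * ρ 1 1 * Complex.I_sq

lemma c21 : (shadowGate 2 * ρ * (shadowGate 2)ᴴ) 1 1
    = (ρ 0 0 - Complex.I * ρ 0 1 + Complex.I * ρ 1 0 + ρ 1 1) / 2 := by
  simp [sg2, Matrix.mul_apply, Matrix.vecMul, dotProduct, Fin.sum_univ_two, Matrix.conjTranspose_apply,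
    Complex.ofReal_inv]
  linear_combination (ρ 0 0 - Complex.I * ρ 0 1 + Complex.I * ρ 1 0
      - Complex.I ^ 2 * ρ 1 1) * h2 - (1/2 : ℂ) * ρ 1 1 * Complex.I_sq

lemma c00 : (shadowGate 0 * ρ * (shadowGate 0)ᴴ) 0 0 = ρ 0 0 := by
  simp [sg0, Matrix.mul_apply, Matrix.vecMul, dotProduct, Fin.sum_univ_two, Matrix.conjTranspose_apply]
lemma c01 : (shadowGate 0 * ρ * (shadowGate 0)ᴴ) 1 1 = ρ 1 1 := by
  simp [sg0, Matrix.mul_apply, Matrix.vecMul, dotProduct, Fin.sum_univ_two, Matrix.conjTranspose_apply]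

end

/-- (Unbiasedness of the single-qubit classical shadow.) For a
single-qubit state `ρ`, choosing `U` uniformly from `{𝟙, H, HS†}` and measuring `UρU†`
in the computational basis (outcome `u` with Born probability `⟨u|UρU†|u⟩`), the random
matrix `ρ̂ = 3U†|u⟩⟨u|U − 𝟙` has expectation `ρ`. -/
theorem single_qubit_shadow_unbiased
    (ρ : Matrix (Fin 2) (Fin 2) ℂ) (hpsd : ρ.PosSemidef) (htr : ρ.trace = 1) :
    ∑ g : Fin 3, ∑ u : Fin 2,
      ((1 / 3 : ℂ) * ((shadowGate g * ρ * (shadowGate g)ᴴ) u u)) •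
        shadowFactor (shadowGate g) u = ρ := by
  rw [Fin.sum_univ_three]
  simp only [Fin.sum_univ_two]
  rw [c00, c01, c10, c11, c20, c21, sf00, sf01, sf10, sf11, sf20, sf21]
  ext i j
  fin_cases i <;> fin_cases j <;>
    simp [Matrix.add_apply, Matrix.smul_apply, smul_eq_mul, Fin.mk_zero, Fin.mk_one, Fin.isValue] <;>
    try ring
  · linear_combination (1/2 : ℂ) * (ρ 1 0 - ρ 0 1) * Complex.I_sq
  · linear_combination (1/2 : ℂ) * (ρ 0 1 - ρ 1 0) * Complex.I_sq

end
end

section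
/- Let ρ be an n-qubit quantum state. Choose gates U_1, …, U_n independently and uniformly from {𝟙, H, HS†}, apply U_1 ⊗ … ⊗ U_n to ρ, and measure each qubit in the computational basis, obtaining outcomes u_1, …, u_n ∈ {0,1} distributed via the Born rule. Then the random operator ρ̂ = ⨂_{i=1}^{n} (3 U_i† |u_i⟩⟨u_i| U_i − 𝟙) is an unbiased estimator of ρ: 𝔼[ρ̂] = ρ. Consequently, for every n-qubit observable O, 𝔼[tr(O ρ̂)] = tr(O ρ). -/
open scoped BigOperators Matrix Classical ComplexOrder

noncomputable section

lemma shadow_sg0 : shadowGate 0 = !![1,0;0,1] := by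
  simp [shadowGate]; ext i j; fin_cases i <;> fin_cases j <;> simp [Matrix.one_apply]

lemma shadow_sg1 : shadowGate 1 = (Real.sqrt 2 : ℂ)⁻¹ • !![1, 1; 1, -1] := by
  simp [shadowGate, Hgate]

lemma shadow_sg2 : shadowGate 2 = (Real.sqrt 2 : ℂ)⁻¹ • !![1, -Complex.I; 1, Complex.I] := by
  show Hgate * Sgateᴴ = _
  rw [Hgate, Sgate]
  ext i j; fin_cases i <;> fin_cases j <;>
    simp [Matrix.mul_apply, Fin.sum_univ_two, Matrix.conjTranspose_apply]

set_option maxHeartbeats 2000000 in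
lemma shadow_single (a b x y : Fin 2) :
    ∑ p : Fin 3 × Fin 2, shadowGate p.1 p.2 a * (starRingEnd ℂ) (shadowGate p.1 p.2 b) *
      shadowFactor (shadowGate p.1) p.2 x y
    = 3 * ((if a = x then 1 else 0) * (if b = y then 1 else 0)) := by
  have h2 : (Real.sqrt 2 : ℂ) * (Real.sqrt 2 : ℂ) = 2 := by
    norm_cast
    exact Real.mul_self_sqrt (by norm_num)
  have h4 : Real.sqrt 2 ^ 4 = 4 := by
    have := Real.sq_sqrt (by norm_num : (2:ℝ) ≥ 0)
    nlinarith [this]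
  rw [Fintype.sum_prod_type, Fin.sum_univ_three]
  simp only [shadow_sg0, shadow_sg1, shadow_sg2]
  fin_cases a <;> fin_cases b <;> fin_cases x <;> fin_cases y <;>
    · simp only [Fin.sum_univ_two, shadowFactor, ketbra,
        Matrix.mul_apply, Matrix.smul_apply, Matrix.sub_apply, Matrix.one_apply,
        Matrix.conjTranspose_apply, Matrix.single, Matrix.of_apply, Matrix.cons_val',
        Matrix.cons_val_zero, Matrix.cons_val_one, Matrix.head_cons, Matrix.head_fin_const,
        Matrix.empty_val', Matrix.cons_val_fin_one, smul_eq_mul, Fin.isValue,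
        if_true, if_false, reduceIte, map_mul, map_inv₀, Complex.conj_ofReal, map_one]
      norm_num [Complex.ext_iff]
      try ring_nf
      try norm_num [h4, h2]

lemma shadow_tensor_sum (n : ℕ) (a b x y : Fin n → Fin 2) :
    ∑ g : Fin n → Fin 3, ∑ u : Fin n → Fin 2,
      (∏ i, shadowGate (g i) (u i) (a i)) *
        (starRingEnd ℂ) (∏ i, shadowGate (g i) (u i) (b i)) *
        ∏ i, shadowFactor (shadowGate (g i)) (u i) (x i) (y i)
    = (3:ℂ)^n * ((if a = x then 1 else 0) * (if b = y then 1 else 0)) := by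
  have step1 : ∀ (g : Fin n → Fin 3) (u : Fin n → Fin 2),
      (∏ i, shadowGate (g i) (u i) (a i)) *
        (starRingEnd ℂ) (∏ i, shadowGate (g i) (u i) (b i)) *
        ∏ i, shadowFactor (shadowGate (g i)) (u i) (x i) (y i)
      = ∏ i, (shadowGate (g i) (u i) (a i) * (starRingEnd ℂ) (shadowGate (g i) (u i) (b i)) *
          shadowFactor (shadowGate (g i)) (u i) (x i) (y i)) := by
    intro g u
    rw [map_prod, ← Finset.prod_mul_distrib, ← Finset.prod_mul_distrib]
  simp only [step1]
  have sp := Fintype.sum_prod_type (f := fun (p : (Fin n → Fin 3) × (Fin n → Fin 2)) =>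
      (∏ i, (shadowGate (p.1 i) (p.2 i) (a i) * (starRingEnd ℂ) (shadowGate (p.1 i) (p.2 i) (b i)) *
          shadowFactor (shadowGate (p.1 i)) (p.2 i) (x i) (y i))))
  rw [← sp]
  have step2 : ∑ p : (Fin n → Fin 3) × (Fin n → Fin 2),
      (∏ i, (shadowGate (p.1 i) (p.2 i) (a i) * (starRingEnd ℂ) (shadowGate (p.1 i) (p.2 i) (b i)) *
          shadowFactor (shadowGate (p.1 i)) (p.2 i) (x i) (y i)))
      = ∑ h : Fin n → Fin 3 × Fin 2,
      (∏ i, (shadowGate (h i).1 (h i).2 (a i) * (starRingEnd ℂ) (shadowGate (h i).1 (h i).2 (b i)) *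
          shadowFactor (shadowGate (h i).1) (h i).2 (x i) (y i))) := by
    exact (Fintype.sum_equiv (Equiv.arrowProdEquivProdArrow (Fin n) _ _) _ _
      (fun h => rfl)).symm
  have ps := Fintype.prod_sum (f := fun (i : Fin n) (p : Fin 3 × Fin 2) =>
      shadowGate p.1 p.2 (a i) * (starRingEnd ℂ) (shadowGate p.1 p.2 (b i)) *
        shadowFactor (shadowGate p.1) p.2 (x i) (y i))
  rw [step2, ← ps]
  have step3 : ∀ i : Fin n, (∑ p : Fin 3 × Fin 2,
      shadowGate p.1 p.2 (a i) * (starRingEnd ℂ) (shadowGate p.1 p.2 (b i)) *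
        shadowFactor (shadowGate p.1) p.2 (x i) (y i))
      = 3 * ((if a i = x i then 1 else 0) * (if b i = y i then 1 else 0)) :=
    fun i => shadow_single _ _ _ _
  rw [Finset.prod_congr rfl (fun i _ => step3 i)]
  rw [Finset.prod_mul_distrib, Finset.prod_mul_distrib, Finset.prod_const, Fintype.prod_boole,
    Fintype.prod_boole]
  simp [funext_iff]

lemma shadow_swap4 {α β γ δ : Type*} [Fintype α] [Fintype β] [Fintype γ] [Fintype δ]
    (f : α → β → γ → δ → ℂ) :
    ∑ g : α, ∑ u : β, ∑ b : γ, ∑ a : δ, f g u b a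
      = ∑ b : γ, ∑ a : δ, ∑ g : α, ∑ u : β, f g u b a :=
  calc ∑ g : α, ∑ u : β, ∑ b : γ, ∑ a : δ, f g u b a
      = ∑ g : α, ∑ b : γ, ∑ u : β, ∑ a : δ, f g u b a :=
        Finset.sum_congr rfl fun _ _ => Finset.sum_comm
    _ = ∑ b : γ, ∑ g : α, ∑ u : β, ∑ a : δ, f g u b a := Finset.sum_comm
    _ = ∑ b : γ, ∑ g : α, ∑ a : δ, ∑ u : β, f g u b a :=
        Finset.sum_congr rfl fun _ _ => Finset.sum_congr rfl fun _ _ => Finset.sum_comm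
    _ = ∑ b : γ, ∑ a : δ, ∑ g : α, ∑ u : β, f g u b a :=
        Finset.sum_congr rfl fun _ _ => Finset.sum_comm

lemma shadow_key (n : ℕ) (ρ : QOp n) (x y : Fin n → Fin 2) :
    ∑ g : Fin n → Fin 3, ∑ u : Fin n → Fin 2,
      (1/3:ℂ)^n * ((rotGate g * ρ * (rotGate g)ᴴ) u u) * shadowOf g u x y = ρ x y := by
  have expand : ∀ (g : Fin n → Fin 3) (u : Fin n → Fin 2),
      (rotGate g * ρ * (rotGate g)ᴴ) u u
        = ∑ b, ∑ a, rotGate g u a * ρ a b * (starRingEnd ℂ) (rotGate g u b) := by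
    intro g u
    simp [Matrix.mul_apply, Matrix.conjTranspose_apply, Finset.sum_mul]
  have inner : ∀ (g : Fin n → Fin 3) (u : Fin n → Fin 2),
      (1/3:ℂ)^n * ((rotGate g * ρ * (rotGate g)ᴴ) u u) * shadowOf g u x y
        = ∑ b, ∑ a, (ρ a b * (1/3:ℂ)^n) *
            (rotGate g u a * (starRingEnd ℂ) (rotGate g u b) * shadowOf g u x y) := by
    intro g u
    rw [expand g u, Finset.mul_sum, Finset.sum_mul]
    refine Finset.sum_congr rfl fun b _ => ?_
    rw [Finset.mul_sum, Finset.sum_mul]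
    exact Finset.sum_congr rfl fun a _ => by ring
  calc ∑ g : Fin n → Fin 3, ∑ u : Fin n → Fin 2,
        (1/3:ℂ)^n * ((rotGate g * ρ * (rotGate g)ᴴ) u u) * shadowOf g u x y
      = ∑ g : Fin n → Fin 3, ∑ u : Fin n → Fin 2, ∑ b, ∑ a, (ρ a b * (1/3:ℂ)^n) *
            (rotGate g u a * (starRingEnd ℂ) (rotGate g u b) * shadowOf g u x y) :=
        Finset.sum_congr rfl fun g _ => Finset.sum_congr rfl fun u _ => inner g u
    _ = ∑ b, ∑ a, ∑ g : Fin n → Fin 3, ∑ u : Fin n → Fin 2, (ρ a b * (1/3:ℂ)^n) *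
            (rotGate g u a * (starRingEnd ℂ) (rotGate g u b) * shadowOf g u x y) :=
        shadow_swap4 _
    _ = ∑ b, ∑ a, (ρ a b * (1/3:ℂ)^n) *
          ∑ g : Fin n → Fin 3, ∑ u : Fin n → Fin 2,
            (rotGate g u a * (starRingEnd ℂ) (rotGate g u b) * shadowOf g u x y) := by
        simp only [← Finset.mul_sum]
    _ = ∑ b, ∑ a, (ρ a b * (1/3:ℂ)^n) *
          ((3:ℂ)^n * ((if a = x then 1 else 0) * (if b = y then 1 else 0))) := by
        refine Finset.sum_congr rfl fun b _ => Finset.sum_congr rfl fun a _ => ?_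
        rw [← shadow_tensor_sum n a b x y]
        simp only [rotGate, shadowOf, tens]
    _ = ∑ b, ∑ a, (if a = x then (if b = y then ρ a b else 0) else 0) := by
        have h13 : (1/3:ℂ)^n * 3^n = 1 := by rw [← mul_pow]; norm_num
        refine Finset.sum_congr rfl fun b _ => Finset.sum_congr rfl fun a _ => ?_
        by_cases hax : a = x <;> by_cases hby : b = y <;> simp [hax, hby] <;>
          linear_combination ρ x y * h13
    _ = ρ x y := by simp [Finset.sum_ite_eq']

/-- (Unbiasedness of the `n`-qubit classical shadow.) For an `n`-qubit
state `ρ`, choosing gates `U₁, …, Uₙ` i.i.d. uniformly from `{𝟙, H, HS†}` and measuring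
each qubit of `(U₁⊗…⊗Uₙ)ρ(U₁⊗…⊗Uₙ)†` in the computational basis (Born rule), the random
operator `ρ̂ = ⨂ᵢ (3Uᵢ†|uᵢ⟩⟨uᵢ|Uᵢ − 𝟙)` satisfies `𝔼[ρ̂] = ρ`; consequently, for every
`n`-qubit observable `O`, `𝔼[tr(O ρ̂)] = tr(O ρ)`. -/
theorem n_qubit_shadow_unbiased
    (n : ℕ) (ρ : QOp n) (hρ : IsState ρ) :
    (∑ s : Sample n, (sampleWeight ρ s : ℂ) • shadowOf s.1 s.2 = ρ) ∧
    (∀ O : QOp n, O.IsHermitian →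
      ∑ s : Sample n, (sampleWeight ρ s : ℂ) * (O * shadowOf s.1 s.2).trace =
        (O * ρ).trace) := by
  have hreal : ∀ (g : Fin n → Fin 3) (u : Fin n → Fin 2),
      ((bornProb ρ g u : ℝ) : ℂ) = (rotGate g * ρ * (rotGate g)ᴴ) u u := by
    intro g u
    have h := (hρ.1.mul_mul_conjTranspose_same (rotGate g)).isHermitian
    have hc : (starRingEnd ℂ) ((rotGate g * ρ * (rotGate g)ᴴ) u u)
        = (rotGate g * ρ * (rotGate g)ᴴ) u u := by
      have h2 := congrFun (congrFun h.eq u) u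
      rw [Matrix.conjTranspose_apply] at h2
      exact h2
    exact Complex.conj_eq_iff_re.mp hc
  have part1 : ∑ s : Sample n, (sampleWeight ρ s : ℂ) • shadowOf s.1 s.2 = ρ := by
    ext x y
    rw [Matrix.sum_apply]
    simp only [Matrix.smul_apply, smul_eq_mul]
    rw [Fintype.sum_prod_type]
    have hco : ∀ (g : Fin n → Fin 3) (u : Fin n → Fin 2),
        ((sampleWeight ρ (g, u) : ℝ) : ℂ) * shadowOf g u x y
          = (1/3:ℂ)^n * ((rotGate g * ρ * (rotGate g)ᴴ) u u) * shadowOf g u x y := by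
      intro g u
      rw [sampleWeight]
      push_cast
      rw [hreal g u]
    simp only [hco]
    exact shadow_key n ρ x y
  refine ⟨part1, fun O _ => ?_⟩
  calc ∑ s : Sample n, (sampleWeight ρ s : ℂ) * (O * shadowOf s.1 s.2).trace
      = (O * ∑ s : Sample n, (sampleWeight ρ s : ℂ) • shadowOf s.1 s.2).trace := by
        rw [Matrix.mul_sum, Matrix.trace_sum]
        refine Finset.sum_congr rfl fun s _ => ?_
        rw [Matrix.mul_smul, Matrix.trace_smul, smul_eq_mul]
    _ = (O * ρ).trace := by rw [part1]


end
end
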